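/- Let $\alpha \in [0,2)$, $M>0$, and let $(g_k)_{k\ge1}$ be a complex sequence with $\sum_k |g_k|^2 = 1$ and $\ell := \sum_{k=1}^\infty k^2 |g_k|^2 < \infty$. If $(b_k)$ and $(c_k)$ satisfy $|b_k|, |c_k| \le M k^\alpha$, then $\left| \sum_{k=1}^\infty \left( c_k g_k \overline{g_{k+1}} + b_k g_{k+1} \overline{g_k} \right) \right| \le 2M \, \ell^{\alpha/2}$. -/

import Mathlib

/-!
Each term is bounded via the triangle inequality and `2|g_k||g_{k+1}| ≤ |g_k|² + |g_{k+1}|²`;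
as `k ↦ k^α` is increasing, the whole sum is then at most `2M ∑ k^α |g_k|²`. Since the `|g_k|²`
are probability weights, Hölder with exponents `2/α` and `2/(2-α)` gives
`∑ k^α |g_k|² ≤ (∑ k² |g_k|²)^(α/2) = ℓ^(α/2)`.
-/

open Complex

theorem summable_and_tsum_rpow_mul_le {ι : Type*} {x p : ι → ℝ} {α ℓ : ℝ}
    (hα0 : 0 ≤ α) (hα2 : α ≤ 2) (hx : ∀ i, 0 ≤ x i) (hp : ∀ i, 0 ≤ p i)
    (hp1 : HasSum p 1) (hℓ : HasSum (fun i => x i ^ 2 * p i) ℓ) :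
    Summable (fun i => x i ^ α * p i) ∧ ∑' i, x i ^ α * p i ≤ ℓ ^ (α / 2) := by
  rcases hα0.eq_or_lt with rfl | hα0
  · simpa using ⟨hp1.summable, hp1.tsum_eq.le⟩
  rcases hα2.eq_or_lt with rfl | hα2
  · simpa [Real.rpow_two] using ⟨hℓ.summable, hℓ.tsum_eq.le⟩
  -- Hölder with exponents `2/α`, `2/(2-α)`, splitting `x^α p = (x^2 p)^(α/2) * p^((2-α)/2)`
  have hpq : (2 / α).HolderConjugate (2 / (2 - α)) := by
    rw [Real.holderConjugate_iff]
    refine ⟨by rw [lt_div_iff₀ hα0]; linarith, ?_⟩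
    field_simp
    ring
  have hxp : ∀ i, 0 ≤ x i ^ 2 * p i := fun i => mul_nonneg (sq_nonneg _) (hp i)
  have hu : ∀ i, ((x i ^ 2 * p i) ^ (α / 2)) ^ (2 / α) = x i ^ 2 * p i := fun i => by
    rw [← Real.rpow_mul (hxp i), show α / 2 * (2 / α) = 1 by field_simp, Real.rpow_one]
  have hv : ∀ i, (p i ^ ((2 - α) / 2)) ^ (2 / (2 - α)) = p i := fun i => by
    rw [← Real.rpow_mul (hp i), show (2 - α) / 2 * (2 / (2 - α)) = 1 by
      field_simp [(sub_pos.2 hα2).ne'], Real.rpow_one]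
  have hsplit : α / 2 + (2 - α) / 2 = 1 := by ring
  have huv : ∀ i, (x i ^ 2 * p i) ^ (α / 2) * p i ^ ((2 - α) / 2) = x i ^ α * p i := fun i => by
    rw [Real.mul_rpow (sq_nonneg _) (hp i), mul_assoc,
      ← Real.rpow_add' (hp i) (hsplit ▸ one_ne_zero), hsplit, Real.rpow_one,
      ← Real.rpow_natCast, ← Real.rpow_mul (hx i)]
    norm_num [mul_div_cancel₀]
  have holder := Real.summable_and_inner_le_Lp_mul_Lq_tsum_of_nonneg hpq
    (f := fun i => (x i ^ 2 * p i) ^ (α / 2)) (g := fun i => p i ^ ((2 - α) / 2))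
    (fun i => Real.rpow_nonneg (hxp i) _) (fun i => Real.rpow_nonneg (hp i) _)
    (by simpa only [hu] using hℓ.summable) (by simpa only [hv] using hp1.summable)
  simpa only [huv, hu, hv, hℓ.tsum_eq, hp1.tsum_eq, Real.one_rpow, mul_one, one_div_div]
    using holder

theorem norm_mul_mul_conj_add_le {𝕜 : Type*} [RCLike 𝕜] {b c z w : 𝕜} {m : ℝ}
    (hb : ‖b‖ ≤ m) (hc : ‖c‖ ≤ m) :
    ‖c * z * starRingEnd 𝕜 w + b * w * starRingEnd 𝕜 z‖ ≤ m * (‖z‖ ^ 2 + ‖w‖ ^ 2) :=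
  calc ‖c * z * starRingEnd 𝕜 w + b * w * starRingEnd 𝕜 z‖
      ≤ ‖c‖ * (‖z‖ * ‖w‖) + ‖b‖ * (‖z‖ * ‖w‖) := by
        refine (norm_add_le _ _).trans_eq ?_
        simp only [norm_mul, RCLike.norm_conj]
        ring
    _ ≤ m * (‖z‖ * ‖w‖) + m * (‖z‖ * ‖w‖) := by gcongr
    _ ≤ m * (‖z‖ ^ 2 + ‖w‖ ^ 2) := by
        nlinarith [sq_nonneg (‖z‖ - ‖w‖), (norm_nonneg b).trans hb]

theorem offdiag_form_bound_general (α M : ℝ) (hα0 : 0 ≤ α) (hα2 : α < 2) (hM : 0 < M)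
    (g b c : ℕ → ℂ)
    (hb : ∀ k : ℕ, 1 ≤ k → ‖b k‖ ≤ M * (k : ℝ) ^ α)
    (hc : ∀ k : ℕ, 1 ≤ k → ‖c k‖ ≤ M * (k : ℝ) ^ α)
    (hnorm : HasSum (fun k : ℕ => ‖g (k + 1)‖ ^ 2) 1)
    (ℓ : ℝ)
    (hℓ : HasSum (fun k : ℕ => ((k + 1 : ℕ) : ℝ) ^ 2 * ‖g (k + 1)‖ ^ 2) ℓ) :
    ‖∑' k : ℕ,
        (c (k + 1) * g (k + 1) * (starRingEnd ℂ) (g (k + 2)) +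
         b (k + 1) * g (k + 2) * (starRingEnd ℂ) (g (k + 1)))‖
      ≤ 2 * M * ℓ ^ (α / 2) := by
  set A : ℕ → ℝ := fun k => ((k + 1 : ℕ) : ℝ) ^ α * ‖g (k + 1)‖ ^ 2 with hA_def
  have hA0 : ∀ k, 0 ≤ A k := fun k => by positivity
  obtain ⟨hA, hAℓ⟩ : Summable A ∧ ∑' k, A k ≤ ℓ ^ (α / 2) :=
    summable_and_tsum_rpow_mul_le hα0 hα2.le (fun k => Nat.cast_nonneg _)
      (fun k => sq_nonneg _) hnorm hℓ
  have hA_succ : Summable (fun k => A (k + 1)) := hA.comp_injective (add_left_injective 1)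
  have hterm : ∀ k, ‖c (k + 1) * g (k + 1) * (starRingEnd ℂ) (g (k + 2)) +
      b (k + 1) * g (k + 2) * (starRingEnd ℂ) (g (k + 1))‖ ≤ M * (A k + A (k + 1)) := fun k => by
    have hmono : ((k + 1 : ℕ) : ℝ) ^ α ≤ ((k + 2 : ℕ) : ℝ) ^ α := by gcongr; omega
    calc _ ≤ M * ((k + 1 : ℕ) : ℝ) ^ α * (‖g (k + 1)‖ ^ 2 + ‖g (k + 2)‖ ^ 2) :=
          norm_mul_mul_conj_add_le (hb _ k.succ_pos) (hc _ k.succ_pos)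
      _ ≤ M * (A k + A (k + 1)) := by
          simp only [hA_def]
          nlinarith [mul_le_mul_of_nonneg_left hmono (mul_nonneg hM.le (sq_nonneg ‖g (k + 2)‖))]
  have hshift : ∑' k, A (k + 1) ≤ ∑' k, A k :=
    tsum_comp_le_tsum_of_inj hA hA0 (add_left_injective 1)
  calc _ ≤ M * (∑' k, A k + ∑' k, A (k + 1)) :=
        tsum_of_norm_bounded ((hA.hasSum.add hA_succ.hasSum).mul_left M) hterm
    _ ≤ 2 * M * ℓ ^ (α / 2) := by nlinarith

theorem offdiag_form_bound (α M : ℝ) (hα0 : 0 ≤ α) (hα2 : α < 2) (hM : 0 < M)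
    (g b c : ℕ → ℂ)
    (hb : ∀ k : ℕ, 1 ≤ k → ‖b k‖ ≤ M * (k : ℝ) ^ α)
    (hc : ∀ k : ℕ, 1 ≤ k → ‖c k‖ ≤ M * (k : ℝ) ^ α)
    (hnorm : HasSum (fun k : ℕ => ‖g (k + 1)‖ ^ 2) 1)
    (ℓ : ℝ)
    (hℓ : HasSum (fun k : ℕ => ((k + 1 : ℕ) : ℝ) ^ 2 * ‖g (k + 1)‖ ^ 2) ℓ)
    (hsum : Summable (fun k : ℕ =>
      c (k + 1) * g (k + 1) * (starRingEnd ℂ) (g (k + 2)) +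
      b (k + 1) * g (k + 2) * (starRingEnd ℂ) (g (k + 1)))) :
    ‖∑' k : ℕ,
        (c (k + 1) * g (k + 1) * (starRingEnd ℂ) (g (k + 2)) +
         b (k + 1) * g (k + 2) * (starRingEnd ℂ) (g (k + 1)))‖
      ≤ 2 * M * ℓ ^ (α / 2) :=
  offdiag_form_bound_general α M hα0 hα2 hM g b c hb hc hnorm ℓ hℓ
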